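/- Let F, G be distribution functions and t ∈ (0,1) not a generalized contact point of F⁻¹ and G⁻¹. Then sgn(t - F(G⁻¹(t))) = sgn(F⁻¹(t) - G⁻¹(t)), and in particular t ≠ F(G⁻¹(t)). -/

import Mathlib

/-!
For `t ∈ (0,1)` the quantile function is a Galois adjoint of `F`: `F⁻¹(t) ≤ x ↔ t ≤ F(x)`.
Hence `G⁻¹(t) < F⁻¹(t)` forces `F(G⁻¹(t)) < t`, while `F⁻¹(t) < G⁻¹(t)` gives `t ≤ F(G⁻¹(t))`.
Equality `F(G⁻¹(t)) = t` in the latter case would make `G⁻¹(t) < F⁻¹(s)` for every `s > t`,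
so `G⁻¹(t) ≤ F⁻¹(t+)` and `t` would be a generalized contact point.
-/

open Set Filter MeasureTheory

/-- `quantile F t = inf {x | t ≤ F x}` is the (left-continuous) quantile function of `F`. -/
noncomputable def quantile (F : ℝ → ℝ) (t : ℝ) : ℝ := sInf {x | t ≤ F x}

/-- `F` is a distribution function: nondecreasing, right-continuous, with limits
`0` at `-∞` and `1` at `+∞`. -/
def IsDistFun (F : ℝ → ℝ) : Prop :=
  Monotone F ∧ (∀ x, ContinuousWithinAt F (Set.Ici x) x) ∧
    Tendsto F atBot (nhds 0) ∧ Tendsto F atTop (nhds 1)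

/-- `t` is a generalized contact point between the quantile functions of `F` and `G`. -/
noncomputable def ContactPoint (F G : ℝ → ℝ) (t : ℝ) : Prop :=
  quantile F t = quantile G t ∨
    (quantile F t < quantile G t ∧ quantile G t ≤ Function.rightLim (quantile F) t) ∨
    (quantile G t < quantile F t ∧ quantile F t ≤ Function.rightLim (quantile G) t)

open Topology Function

namespace IsDistFun

variable {F : ℝ → ℝ} {t x : ℝ}

lemma nonempty_setOf_le (hF : IsDistFun F) (ht : t < 1) : {x | t ≤ F x}.Nonempty :=
  let ⟨x, hx⟩ := (hF.2.2.2.eventually_const_lt ht).exists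
  ⟨x, hx.le⟩

lemma bddBelow_setOf_le (hF : IsDistFun F) (ht : 0 < t) : BddBelow {x | t ≤ F x} := by
  obtain ⟨x₀, hx₀⟩ := (hF.2.2.1.eventually_lt_const ht).exists_forall_of_atBot
  exact ⟨x₀, fun y hy => le_of_not_gt fun hyx => (hx₀ y hyx.le).not_ge hy⟩

lemma le_apply_quantile (hF : IsDistFun F) (ht : t ∈ Ioo 0 1) : t ≤ F (quantile F t) := by
  have hcont : Tendsto F (𝓝[>] (quantile F t)) (𝓝 (F (quantile F t))) :=
    (hF.2.1 _).mono_left (nhdsWithin_mono _ Ioi_subset_Ici_self)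
  refine ge_of_tendsto hcont (eventually_nhdsWithin_of_forall fun x hx => ?_)
  obtain ⟨y, hy, hyx⟩ := exists_lt_of_csInf_lt (hF.nonempty_setOf_le ht.2) hx
  exact hy.trans (hF.1 hyx.le)

lemma quantile_le_iff (hF : IsDistFun F) (ht : t ∈ Ioo 0 1) : quantile F t ≤ x ↔ t ≤ F x :=
  ⟨fun h => (hF.le_apply_quantile ht).trans (hF.1 h),
    fun h => csInf_le (hF.bddBelow_setOf_le ht.1) h⟩

lemma monotoneOn_quantile (hF : IsDistFun F) : MonotoneOn (quantile F) (Ioo 0 1) :=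
  fun _ hs _ hs' hss' => (hF.quantile_le_iff hs).2 (hss'.trans (hF.le_apply_quantile hs'))

lemma tendsto_quantile_rightLim (hF : IsDistFun F) (ht : t ∈ Ioo 0 1) :
    Tendsto (quantile F) (𝓝[>] t) (𝓝 (rightLim (quantile F) t)) := by
  have hmono := hF.monotoneOn_quantile.mono (Ioo_subset_Ioo_left ht.1.le)
  have hbdd : BddBelow (quantile F '' Ioo t 1) :=
    ⟨quantile F t, forall_mem_image.2 fun s hs =>
      hF.monotoneOn_quantile ht ⟨ht.1.trans hs.1, hs.2⟩ hs.1.le⟩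
  have h := hmono.tendsto_nhdsWithin_Ioo_right (nonempty_Ioo.2 ht.2) hbdd
  rwa [rightLim_eq_of_tendsto h]

lemma le_rightLim_quantile_of_apply_eq (hF : IsDistFun F) (ht : t ∈ Ioo 0 1) (hx : F x = t) :
    x ≤ rightLim (quantile F) t := by
  refine ge_of_tendsto (hF.tendsto_quantile_rightLim ht) ?_
  filter_upwards [Ioo_mem_nhdsGT ht.2] with s hs
  by_contra! h
  exact hs.1.not_ge (hx ▸ (hF.quantile_le_iff ⟨ht.1.trans hs.1, hs.2⟩).1 h.le)

end IsDistFun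

theorem sign_eq_of_not_contact_general (F G : ℝ → ℝ) (hF : IsDistFun F)
    (t : ℝ) (ht : t ∈ Set.Ioo (0:ℝ) 1) (hnc : ¬ ContactPoint F G t) :
    Real.sign (t - F (quantile G t)) = Real.sign (quantile F t - quantile G t) ∧
      t ≠ F (quantile G t) := by
  rcases lt_trichotomy (quantile F t) (quantile G t) with hlt | heq | hgt
  · have hne : t ≠ F (quantile G t) := fun h =>
      hnc (Or.inr (Or.inl ⟨hlt, hF.le_rightLim_quantile_of_apply_eq ht h.symm⟩))
    have hlt' : t < F (quantile G t) := ((hF.quantile_le_iff ht).1 hlt.le).lt_of_ne hne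
    exact ⟨by rw [Real.sign_of_neg (by linarith), Real.sign_of_neg (by linarith)], hne⟩
  · exact absurd (Or.inl heq) hnc
  · have hgt' : F (quantile G t) < t :=
      lt_of_not_ge fun h => hgt.not_ge ((hF.quantile_le_iff ht).2 h)
    exact ⟨by rw [Real.sign_of_pos (by linarith), Real.sign_of_pos (by linarith)], hgt'.ne'⟩

/-- If `t ∈ (0,1)` is not a generalized contact point, then
`sgn (t - F(G⁻¹(t))) = sgn (F⁻¹(t) - G⁻¹(t))`; in particular `t ≠ F(G⁻¹(t))`. -/
theorem sign_eq_of_not_contact (F G : ℝ → ℝ) (hF : IsDistFun F) (hG : IsDistFun G)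
    (t : ℝ) (ht : t ∈ Set.Ioo (0:ℝ) 1) (hnc : ¬ ContactPoint F G t) :
    Real.sign (t - F (quantile G t)) = Real.sign (quantile F t - quantile G t) ∧
      t ≠ F (quantile G t) :=
  sign_eq_of_not_contact_general F G hF t ht hnc
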